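/- arXiv:2406.07469 — 5 statements merged into one kernel-verified Lean document; each statement's English description precedes it below -/
import Mathlib

section
/- cos(3π/7)/sin(π/7) − cos(π/7)/sin(2π/7) + cos(2π/7)/sin(3π/7) = 0. -/
/-! With `7x = π` the middle term is `1 / (2 sin x)`, and after multiplying by `2 sin x sin 3x`
the outer two terms give `sin 6x + (sin 3x - sin x)`; since `sin 6x = sin (π - x) = sin x`, this is
`sin 3x`, i.e. the outer terms also sum to `1 / (2 sin x)`. -/

open Real

lemma cos_div_sin_two_mul {x : ℝ} (hc : cos x ≠ 0) : cos x / sin (2 * x) = (2 * sin x)⁻¹ := by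
  rw [sin_two_mul]
  field_simp

lemma two_mul_sin_mul_cos_two_mul (x : ℝ) : 2 * sin x * cos (2 * x) = sin (3 * x) - sin x := by
  rw [sin_sub_sin]
  ring_nf

lemma cos_three_mul_div_sin_add_cos_two_mul_div_sin_three_mul {x : ℝ} (hs : sin x ≠ 0)
    (h3 : sin (3 * x) ≠ 0) (h6 : sin (6 * x) = sin x) :
    cos (3 * x) / sin x + cos (2 * x) / sin (3 * x) = (2 * sin x)⁻¹ := by
  have h6' : 2 * sin (3 * x) * cos (3 * x) = sin x := by
    rw [← sin_two_mul, ← h6]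
    ring_nf
  rw [div_add_div _ _ hs h3, inv_eq_one_div,
    div_eq_div_iff (mul_ne_zero hs h3) (mul_ne_zero two_ne_zero hs)]
  linear_combination sin x * (h6' + two_mul_sin_mul_cos_two_mul x)

theorem trig_identity_seven :
    Real.cos (3 * π / 7) / Real.sin (π / 7) - Real.cos (π / 7) / Real.sin (2 * π / 7) +
      Real.cos (2 * π / 7) / Real.sin (3 * π / 7) = 0 := by
  have hs : 0 < sin (π / 7) := sin_pos_of_pos_of_lt_pi (by positivity) (by linarith [pi_pos])
  have hc : 0 < cos (π / 7) := cos_pos_of_mem_Ioo ⟨by linarith [pi_pos], by linarith [pi_pos]⟩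
  have h3 : 0 < sin (3 * (π / 7)) :=
    sin_pos_of_pos_of_lt_pi (by positivity) (by linarith [pi_pos])
  have h6 : sin (6 * (π / 7)) = sin (π / 7) := by
    rw [← sin_pi_sub]
    ring_nf
  rw [mul_div_assoc, mul_div_assoc, cos_div_sin_two_mul hc.ne', sub_add_eq_add_sub,
    cos_three_mul_div_sin_add_cos_two_mul_div_sin_three_mul hs.ne' h3.ne' h6, sub_self]
end

section
/- cos(π/7)/sin(π/7) + cos(2π/7)/sin(2π/7) − cos(3π/7)/sin(3π/7) = √7. -/
/-!
With `c = cos (π / 7)` and `s = sin (π / 7)`, the double and triple angle formulas turn the left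
side into a rational function of `c` and `s`. Since `cos (4π/7) = -cos (3π/7)`, `c` is a root of
`8c³ - 4c² - 4c + 1`; modulo this cubic and `s² + c² = 1` the rational function squares to `7`,
and it is positive because `c > 1/2`.
-/

open Real

theorem Real.cos_four_mul (x : ℝ) : cos (4 * x) = 8 * cos x ^ 4 - 8 * cos x ^ 2 + 1 := by
  rw [show 4 * x = 2 * (2 * x) by ring, cos_two_mul, cos_two_mul]
  ring

theorem Real.sin_three_mul_eq_sin_mul (x : ℝ) : sin (3 * x) = sin x * (4 * cos x ^ 2 - 1) := by
  rw [sin_three_mul]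
  linear_combination -4 * sin x * sin_sq_add_cos_sq x

theorem Real.half_lt_cos_pi_div_seven : 1 / 2 < cos (π / 7) := by
  rw [← cos_pi_div_three]
  exact cos_lt_cos_of_nonneg_of_le_pi (by positivity) (by linarith [pi_pos])
    (by linarith [pi_pos])

theorem Real.cos_pi_div_seven_cubic :
    8 * cos (π / 7) ^ 3 - 4 * cos (π / 7) ^ 2 - 4 * cos (π / 7) + 1 = 0 := by
  have hsupp : cos (4 * (π / 7)) = -cos (3 * (π / 7)) := by
    rw [← cos_pi_sub]
    ring_nf
  rw [cos_four_mul, cos_three_mul] at hsupp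
  have hfactor : (cos (π / 7) + 1) *
      (8 * cos (π / 7) ^ 3 - 4 * cos (π / 7) ^ 2 - 4 * cos (π / 7) + 1) = 0 := by
    linear_combination hsupp
  have hpos : cos (π / 7) + 1 ≠ 0 := by linarith [half_lt_cos_pi_div_seven]
  exact (mul_eq_zero.mp hfactor).resolve_left hpos

theorem cot_sum_eq_sqrt_seven_of_cubic {c s : ℝ} (hs : 0 < s) (hc : 1 / 2 < c)
    (hsc : s ^ 2 + c ^ 2 = 1) (hcubic : 8 * c ^ 3 - 4 * c ^ 2 - 4 * c + 1 = 0) :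
    c / s + (2 * c ^ 2 - 1) / (2 * s * c) - (4 * c ^ 3 - 3 * c) / (s * (4 * c ^ 2 - 1)) = √7 := by
  have hquad : 0 < 4 * c ^ 2 - 1 := by nlinarith
  have hden : 0 < 2 * s * c * (4 * c ^ 2 - 1) := by positivity
  have hnum : 0 < 8 * c ^ 4 - 2 * c ^ 2 + 1 := by nlinarith [sq_nonneg (c ^ 2 - 1 / 8)]
  have hcombine : c / s + (2 * c ^ 2 - 1) / (2 * s * c) - (4 * c ^ 3 - 3 * c) / (s * (4 * c ^ 2 - 1))
      = (8 * c ^ 4 - 2 * c ^ 2 + 1) / (2 * s * c * (4 * c ^ 2 - 1)) := by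
    have hs' : s ≠ 0 := hs.ne'
    have hsc' : 2 * s * c ≠ 0 := by positivity
    have hsc2 : s * (4 * c ^ 2 - 1) ≠ 0 := by positivity
    rw [div_add_div _ _ hs' hsc', div_sub_div _ _ (mul_ne_zero hs' hsc') hsc2,
      div_eq_div_iff (mul_ne_zero (mul_ne_zero hs' hsc') hsc2) hden.ne']
    ring
  rw [hcombine, eq_comm, sqrt_eq_iff_mul_self_eq_of_pos (div_pos hnum hden), div_mul_div_comm,
    div_eq_iff (mul_pos hden hden).ne']
  linear_combination (64 * c ^ 5 + 32 * c ^ 4 - 40 * c ^ 3 - 12 * c ^ 2 + 4 * c + 1) * hcubic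
    - 28 * c ^ 2 * (4 * c ^ 2 - 1) ^ 2 * hsc

theorem trig_identity_sqrt_seven :
    Real.cos (π / 7) / Real.sin (π / 7) + Real.cos (2 * π / 7) / Real.sin (2 * π / 7) -
      Real.cos (3 * π / 7) / Real.sin (3 * π / 7) = Real.sqrt 7 := by
  rw [mul_div_assoc, mul_div_assoc, cos_two_mul, sin_two_mul, cos_three_mul,
    sin_three_mul_eq_sin_mul]
  exact cot_sum_eq_sqrt_seven_of_cubic (sin_pos_of_pos_of_lt_pi (by positivity)
    (by linarith [pi_pos])) half_lt_cos_pi_div_seven (sin_sq_add_cos_sq _) cos_pi_div_seven_cubic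
end

section
/- Let e(x) = exp(2πi x). Then csc(π/5)·e(0) + csc(2π/5)·e(3/10) + csc(2π/5)·e(3/10+1/10) + csc(π/5)·e(3/10+1/10+3/10) = 0; equivalently, csc(π/5) + csc(2π/5)e^{3πi/5} + csc(2π/5)e^{4πi/5} + csc(π/5)e^{7πi/5} = 0. -/
open Real Complex

theorem four_points_vanish :
    ((Real.sin (π / 5))⁻¹ : ℂ) +
      ((Real.sin (2 * π / 5))⁻¹ : ℂ) * Complex.exp (3 * π * Complex.I / 5) +
      ((Real.sin (2 * π / 5))⁻¹ : ℂ) * Complex.exp (4 * π * Complex.I / 5) +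
      ((Real.sin (π / 5))⁻¹ : ℂ) * Complex.exp (7 * π * Complex.I / 5) = 0 := by
  have h1 : Real.sin (π / 5) ≠ 0 :=
    ne_of_gt (Real.sin_pos_of_pos_of_lt_pi (by positivity) (by linarith [Real.pi_pos]))
  have h2 : Real.sin (2 * π / 5) ≠ 0 :=
    ne_of_gt (Real.sin_pos_of_pos_of_lt_pi (by positivity) (by linarith [Real.pi_pos]))
  set w : ℂ := Complex.exp (π * Complex.I / 5) with hw
  have hw0 : w ≠ 0 := Complex.exp_ne_zero _
  have hwn : ∀ n : ℕ, w ^ n = Complex.exp (n * π * Complex.I / 5) := by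
    intro n
    rw [hw, ← Complex.exp_nat_mul]
    ring_nf
  have hw5 : w ^ 5 = -1 := by
    rw [hwn 5, show (5 : ℕ) * (π : ℂ) * Complex.I / 5 = π * Complex.I by push_cast; ring,
      Complex.exp_pi_mul_I]
  have hinv : w⁻¹ = -w ^ 4 := by
    field_simp
    linear_combination hw5
  have hinv2 : (w ^ 2)⁻¹ = -w ^ 3 := by
    have : w ^ 2 ≠ 0 := pow_ne_zero _ hw0
    field_simp
    linear_combination hw5
  have hs1 : Complex.sin ((π : ℂ) / 5) = (-w ^ 4 - w) * Complex.I / 2 := by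
    rw [Complex.sin,
      show -((π : ℂ) / 5) * Complex.I = -((π : ℂ) * Complex.I / 5) by ring,
      show ((π : ℂ) / 5) * Complex.I = (π : ℂ) * Complex.I / 5 by ring,
      Complex.exp_neg, ← hw, hinv]
  have hs2 : Complex.sin (2 * (π : ℂ) / 5) = (-w ^ 3 - w ^ 2) * Complex.I / 2 := by
    rw [Complex.sin,
      show -(2 * (π : ℂ) / 5) * Complex.I = -((2 : ℕ) * (π : ℂ) * Complex.I / 5) by
        push_cast; ring,
      show (2 * (π : ℂ) / 5) * Complex.I = (2 : ℕ) * (π : ℂ) * Complex.I / 5 by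
        push_cast; ring,
      Complex.exp_neg, ← hwn 2, hinv2]
  have h1' : Complex.sin ((π : ℂ) / 5) ≠ 0 := by
    rw [show ((π : ℂ) / 5) = ((π / 5 : ℝ) : ℂ) by push_cast; ring, ← Complex.ofReal_sin]
    exact Complex.ofReal_ne_zero.mpr h1
  have h2' : Complex.sin (2 * (π : ℂ) / 5) ≠ 0 := by
    rw [show (2 * (π : ℂ) / 5) = ((2 * π / 5 : ℝ) : ℂ) by push_cast; ring,
      ← Complex.ofReal_sin]
    exact Complex.ofReal_ne_zero.mpr h2
  push_cast
  show (Complex.sin ((π : ℂ) / 5))⁻¹ +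
      (Complex.sin (2 * (π : ℂ) / 5))⁻¹ * Complex.exp (3 * (π : ℂ) * Complex.I / 5) +
      (Complex.sin (2 * (π : ℂ) / 5))⁻¹ * Complex.exp (4 * (π : ℂ) * Complex.I / 5) +
      (Complex.sin ((π : ℂ) / 5))⁻¹ * Complex.exp (7 * (π : ℂ) * Complex.I / 5) = 0
  rw [show (3 : ℂ) * π * Complex.I / 5 = (3 : ℕ) * π * Complex.I / 5 by norm_num, ← hwn 3,
      show (4 : ℂ) * π * Complex.I / 5 = (4 : ℕ) * π * Complex.I / 5 by norm_num, ← hwn 4,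
      show (7 : ℂ) * π * Complex.I / 5 = (7 : ℕ) * π * Complex.I / 5 by norm_num, ← hwn 7]
  have key : Complex.sin (2 * (π : ℂ) / 5) + Complex.sin ((π : ℂ) / 5) * w ^ 3 +
      Complex.sin ((π : ℂ) / 5) * w ^ 4 + Complex.sin (2 * (π : ℂ) / 5) * w ^ 7 = 0 := by
    rw [hs1, hs2]
    linear_combination (-(Complex.I / 2) * (w ^ 5 + w ^ 4 + w ^ 3 + w ^ 2)) * hw5
  generalize Complex.sin ((π : ℂ) / 5) = s1 at h1' key ⊢
  generalize Complex.sin (2 * (π : ℂ) / 5) = s2 at h2' key ⊢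
  field_simp [h1', h2']
  linear_combination key
end

section
/- Let c > 0 and gcd(d,c) = 1, and let θ = gcd(c,3). Then 2θ·c·s(d,c) is an integer, where s(d,c) = Σ_{r mod c} ((r/c))((dr/c)) is the Dedekind sum, and ((x)) denotes x − ⌊x⌋ − 1/2 for x ∉ ℤ and 0 for x ∈ ℤ. -/
open Real

/-- The sawtooth function `((x))`. -/
noncomputable def saw (x : ℝ) : ℝ :=
  if Int.fract x = 0 then 0 else x - ⌊x⌋ - 1 / 2

/-- The Dedekind sum `s(d, c) = ∑_{r mod c} ((r/c)) ((dr/c))`. -/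
noncomputable def dedekindSum (d c : ℤ) : ℝ :=
  ∑ r ∈ Finset.range c.toNat, saw ((r : ℝ) / (c : ℝ)) * saw ((d : ℝ) * (r : ℝ) / (c : ℝ))

/-!
For `0 < r < c` coprimality makes `dr/c` non-integral, so `2c ((r/c)) = 2r - c` and
`2c ((dr/c)) = 2 (dr mod c) - c`, and `4c² s(d,c) = ∑_{0<r<c} (2r - c)(2 (dr mod c) - c)`.
Since `dr mod c ≡ dr` modulo `c`, each summand is `4dr² + c²` modulo `2c`, so the numerator is
`2d (c-1)c(2c-1)/3 + (c-1)c²` modulo `2c`. The second term is divisible by `2c` as `(c-1)c` is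
even; the first is after multiplying by `gcd(c,3)`, which supplies the factor `3` whenever
`3 ∤ (c-1)(2c-1)`.
-/

lemma saw_of_fract_ne_zero {x : ℝ} (h : Int.fract x ≠ 0) : saw x = Int.fract x - 1 / 2 := by
  rw [saw, if_neg h, Int.fract]

lemma saw_zero : saw 0 = 0 := by
  simp [saw]

lemma saw_intCast_div_natCast {a : ℤ} {n : ℕ} (ha : ¬ (n : ℤ) ∣ a) :
    saw ((a : ℝ) / n) = (2 * (a % n : ℤ) - n) / (2 * n) := by
  rcases Nat.eq_zero_or_pos n with rfl | hn
  · simp [saw_zero]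
  have hmod : (a % n : ℤ) ≠ 0 := fun h => ha (Int.dvd_of_emod_eq_zero h)
  have hfract := Int.fract_div_intCast_eq_div_intCast_mod (k := ℝ) (m := a) (n := n)
  have hfract_ne : Int.fract ((a : ℝ) / n) ≠ 0 := by
    rw [hfract]
    exact div_ne_zero (by exact_mod_cast hmod) (by positivity)
  rw [saw_of_fract_ne_zero hfract_ne, hfract]
  field_simp

def dedekindSumNumerator (d : ℤ) (n : ℕ) : ℤ :=
  ∑ r ∈ Finset.Ico 1 n, (2 * r - n) * (2 * (d * r % n) - n)

lemma dedekindSum_natCast_eq_numerator_div {d : ℤ} {n : ℕ} (hn : 0 < n) (hdn : IsCoprime d n) :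
    dedekindSum d n = dedekindSumNumerator d n / (4 * n ^ 2) := by
  rw [dedekindSum, Int.toNat_natCast, Finset.range_eq_Ico, Finset.sum_eq_sum_Ico_succ_bot hn,
    dedekindSumNumerator, Int.cast_sum, Finset.sum_div]
  simp only [CharP.cast_eq_zero, zero_div, saw_zero, zero_mul, zero_add]
  refine Finset.sum_congr rfl fun r hr => ?_
  obtain ⟨hr0, hrn⟩ := Finset.mem_Ico.mp hr
  have hndvd_r : ¬ (n : ℤ) ∣ r := fun h => by
    have := Int.le_of_dvd (by omega) h
    omega
  have hndvd_dr : ¬ (n : ℤ) ∣ d * r := fun h => hndvd_r (hdn.symm.dvd_of_dvd_mul_left h)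
  have hsaw_r := saw_intCast_div_natCast hndvd_r
  have hsaw_dr := saw_intCast_div_natCast hndvd_dr
  rw [Int.emod_eq_of_lt (by omega) (by omega)] at hsaw_r
  push_cast at hsaw_r hsaw_dr ⊢
  rw [hsaw_r, hsaw_dr]
  field_simp
  ring

lemma two_mul_sub_mul_two_mul_emod_sub_modEq (d r n : ℤ) :
    (2 * r - n) * (2 * (d * r % n) - n) ≡ 4 * d * r ^ 2 + n ^ 2 [ZMOD 2 * n] := by
  rw [Int.modEq_iff_dvd, Int.emod_def]
  exact ⟨2 * r * (d * r / n) + r + (d * r - n * (d * r / n)), by ring⟩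

lemma six_mul_sum_Ico_one_sq (n : ℕ) :
    6 * ∑ r ∈ Finset.Ico 1 n, (r : ℤ) ^ 2 = (n - 1) * n * (2 * n - 1) := by
  induction n with
  | zero => simp
  | succ n ih =>
    rcases Nat.eq_zero_or_pos n with rfl | hn
    · simp
    rw [Finset.sum_Ico_succ_top hn, mul_add, ih]
    push_cast
    ring

lemma three_dvd_gcd_three_mul (n : ℕ) :
    (3 : ℤ) ∣ Nat.gcd n 3 * ((n - 1) * (2 * n - 1)) := by
  have h3 : n % 3 = 0 ∨ n % 3 = 1 ∨ n % 3 = 2 := by omega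
  rcases h3 with h | h | h
  · have h3θ : 3 ∣ Nat.gcd n 3 := Nat.dvd_gcd (Nat.dvd_of_mod_eq_zero h) dvd_rfl
    exact (Int.natCast_dvd_natCast.mpr h3θ).mul_right _
  · obtain ⟨t, rfl⟩ : ∃ t, n = 3 * t + 1 := ⟨n / 3, by omega⟩
    exact ⟨Nat.gcd (3 * t + 1) 3 * t * (6 * t + 1), by push_cast; ring⟩
  · obtain ⟨t, rfl⟩ : ∃ t, n = 3 * t + 2 := ⟨n / 3, by omega⟩
    exact ⟨Nat.gcd (3 * t + 2) 3 * (3 * t + 1) * (2 * t + 1), by push_cast; ring⟩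

lemma two_mul_dvd_gcd_three_mul_dedekindSumNumerator (d : ℤ) {n : ℕ} (hn : 0 < n) :
    2 * (n : ℤ) ∣ Nat.gcd n 3 * dedekindSumNumerator d n := by
  set θ : ℤ := (Nat.gcd n 3 : ℤ)
  have hnum : dedekindSumNumerator d n ≡
      4 * d * ∑ r ∈ Finset.Ico 1 n, (r : ℤ) ^ 2 + (n - 1) * n ^ 2 [ZMOD 2 * n] := by
    rw [dedekindSumNumerator]
    refine (Int.ModEq.sum fun (r : ℕ) _ =>
      two_mul_sub_mul_two_mul_emod_sub_modEq d (r : ℤ) n).trans ?_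
    rw [Finset.sum_add_distrib, ← Finset.mul_sum, Finset.sum_const, Nat.card_Ico, nsmul_eq_mul,
      Nat.cast_sub hn, Nat.cast_one]
  obtain ⟨u, hu⟩ := three_dvd_gcd_three_mul n
  obtain ⟨e, he⟩ := Int.even_mul_pred_self n
  have hsum_sq : θ * (4 * d * ∑ r ∈ Finset.Ico 1 n, (r : ℤ) ^ 2) = 2 * n * (d * u) := by
    refine mul_left_cancel₀ (by norm_num : (6 : ℤ) ≠ 0) ?_
    linear_combination (4 * d * θ) * six_mul_sum_Ico_one_sq n + (4 * d * n) * hu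
  obtain ⟨k, hk⟩ := (hnum.mul_left θ).symm.dvd
  exact ⟨k + d * u + θ * e, by linear_combination hk + hsum_sq + θ * n * he⟩

theorem two_theta_c_dedekindSum_isInt (d c : ℤ) (hc : 0 < c) (hdc : Int.gcd d c = 1) :
    ∃ k : ℤ, ((2 * Int.gcd c 3 * c : ℤ) : ℝ) * dedekindSum d c = (k : ℝ) := by
  lift c to ℕ using hc.le with n
  have hn : 0 < n := by exact_mod_cast hc
  obtain ⟨k, hk⟩ := two_mul_dvd_gcd_three_mul_dedekindSumNumerator d hn
  refine ⟨k, ?_⟩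
  have hkR : ((Nat.gcd n 3 : ℤ) : ℝ) * dedekindSumNumerator d n = 2 * n * k := by
    exact_mod_cast hk
  rw [dedekindSum_natCast_eq_numerator_div hn (Int.isCoprime_iff_gcd_eq_one.mpr hdc),
    show Int.gcd n 3 = Nat.gcd n 3 from Int.gcd_natCast_natCast n 3]
  push_cast at hkR ⊢
  field_simp
  linear_combination 2 * hkR
end

section
/- Let c > 0 be odd with gcd(d,c) = 1. Then 12·c·s(d,c) ≡ c + 1 − 2·(d/c) (mod 8), where (d/c) is the Jacobi symbol. -/
/-!
Write `ρ(r) = d r mod c` and `S = ∑_{r<c} r ρ(r)`. For `0 < r < c` the two sawtooth values in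
`s(d, c)` are `r / c - 1/2` and `ρ(r) / c - 1/2`, and `ρ(r) + ρ(c - r) = c`, so
`4 c² s(d, c) = 4 S - c² (c - 1)`. Hence `12 c s(d, c)` is the number `k` with
`c k = 12 S - 3 c² (c - 1)`, an integer because `S ≡ d ∑_{r<c} r² (mod c)`, and since `c² ≡ 1 (mod 8)` its class modulo 8 only depends on `c`
and on the parity of `S`.

Replacing `d` by an odd `m ≡ d (mod c)` and pairing `r` with `c - r` gives
`S ≡ (c - 1)/2 + ∑_{1 ≤ a ≤ (c-1)/2} ⌊a m / c⌋ (mod 2)`. Eisenstein's lemma, extended to Jacobi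
symbols by induction on `c` through the reciprocity law and the lattice-point count
`∑ ⌊a q / p⌋ + ∑ ⌊b p / q⌋ = (p-1)/2 · (q-1)/2`, identifies `(-1)` to the power of that sum with
`(m/c) = (d/c)`.
-/

open Real

open Finset

theorem sum_range_two_mul_add_one_eq_sum_Icc {M : Type*} [AddCommMonoid M] (f : ℕ → M)
    (hf : f 0 = 0) (u : ℕ) :
    ∑ r ∈ range (2 * u + 1), f r = ∑ r ∈ Icc 1 u, (f r + f (2 * u + 1 - r)) := by
  have hreflect := sum_Ico_reflect f 1 (m := u + 1) (n := 2 * u + 1) (by omega)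
  rw [show 2 * u + 1 + 1 - (u + 1) = u + 1 by omega, show 2 * u + 1 + 1 - 1 = 2 * u + 1 by omega]
    at hreflect
  rw [range_eq_Ico, sum_eq_sum_Ico_succ_bot (by omega), hf, zero_add,
    ← sum_Ico_consecutive _ (by omega : 1 ≤ u + 1) (by omega : u + 1 ≤ 2 * u + 1), ← hreflect,
    ← sum_add_distrib, Ico_add_one_right_eq_Icc]

theorem not_dvd_mul_of_gcd_eq_one {m : ℤ} {c r : ℕ} (hmc : m.gcd c = 1) (hr0 : 0 < r)
    (hrc : r < c) : ¬ (c : ℤ) ∣ m * r := fun h => by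
  have hcop : IsCoprime (c : ℤ) m := Int.isCoprime_iff_gcd_eq_one.2 (by rwa [Int.gcd_comm])
  have := Int.le_of_dvd (by exact_mod_cast hr0) (hcop.dvd_of_dvd_mul_left h)
  omega

theorem mul_sub_emod_eq_sub_emod {m : ℤ} {c r : ℕ} (hmc : m.gcd c = 1) (hr0 : 0 < r)
    (hrc : r < c) : m * (c - r : ℕ) % c = c - m * r % c := by
  rw [Nat.cast_sub hrc.le, show m * (c - r) = -(m * r) + c * m by ring,
    Int.add_mul_emod_self_left, Int.neg_emod, if_neg (not_dvd_mul_of_gcd_eq_one hmc hr0 hrc)]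
  simp

theorem two_mul_sum_range_mul_emod {m : ℤ} {c : ℕ} (hc : Odd c) (hmc : m.gcd c = 1) :
    2 * ∑ r ∈ range c, m * r % c = c * (c - 1) := by
  obtain ⟨u, rfl⟩ := hc
  have hpair : ∀ r ∈ Icc 1 u, m * r % (2 * u + 1 : ℕ) + m * (2 * u + 1 - r : ℕ) % (2 * u + 1 : ℕ)
      = (2 * u + 1 : ℕ) := by
    intro r hr
    have hr := mem_Icc.1 hr
    rw [mul_sub_emod_eq_sub_emod hmc hr.1 (by omega)]
    ring
  rw [sum_range_two_mul_add_one_eq_sum_Icc _ (by simp), sum_congr rfl hpair, sum_const,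
    Nat.card_Icc, nsmul_eq_mul]
  push_cast
  ring

def sumMulResidue (d : ℤ) (c : ℕ) : ℤ := ∑ r ∈ range c, r * (d * r % c)

theorem saw_eq_fract_sub {x : ℝ} (hx : Int.fract x ≠ 0) : saw x = Int.fract x - 1 / 2 := by
  rw [saw, if_neg hx, ← Int.self_sub_floor]

theorem saw_intCast_div {n : ℤ} {c : ℕ} (hc : 0 < c) (hn : ¬ (c : ℤ) ∣ n) :
    saw (n / c) = ((n % c : ℤ) : ℝ) / c - 1 / 2 := by
  have hfract : Int.fract ((n : ℝ) / c) = ((n % c : ℤ) : ℝ) / c :=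
    Int.fract_div_intCast_eq_div_intCast_mod
  have : n % c ≠ 0 := fun h => hn (Int.dvd_of_emod_eq_zero h)
  rw [saw_eq_fract_sub (by rw [hfract]; positivity), hfract]

theorem four_mul_sq_mul_dedekindSum {d : ℤ} {c : ℕ} (hc : Odd c) (hdc : d.gcd c = 1) :
    4 * c ^ 2 * dedekindSum d c = ((4 * sumMulResidue d c - c ^ 2 * (c - 1) : ℤ) : ℝ) := by
  have hterm : ∀ r ∈ range c, 4 * c ^ 2 * (saw ((r : ℝ) / c) * saw (d * r / c)) =
      (((2 * r - c) * (2 * (d * r % c) - c) : ℤ) : ℝ) - if r = 0 then (c : ℝ) ^ 2 else 0 := by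
    intro r hr
    rcases Nat.eq_zero_or_pos r with rfl | hr0
    · simp [saw, sq]
    have hrc := mem_range.1 hr
    have h1 := saw_intCast_div (n := r) hc.pos
      (by exact_mod_cast Nat.not_dvd_of_pos_of_lt hr0 hrc)
    have h2 := saw_intCast_div hc.pos (not_dvd_mul_of_gcd_eq_one hdc hr0 hrc)
    push_cast at h1 h2
    rw [h1, h2, Int.emod_eq_of_lt (by positivity) (by exact_mod_cast hrc), if_neg hr0.ne']
    have hc0 : (c : ℝ) ≠ 0 := by exact_mod_cast hc.pos.ne'
    field_simp
    push_cast
    ring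
  have hres := two_mul_sum_range_mul_emod hc hdc
  have hid := congrArg (Nat.cast : ℕ → ℤ) (sum_range_id_mul_two c)
  push_cast [Nat.cast_sub hc.pos] at hid
  have hint : ∑ r ∈ range c, (2 * r - c) * (2 * (d * r % c) - c) =
      4 * sumMulResidue d c - c ^ 2 * (c - 1) + c ^ 2 := by
    rw [sum_congr rfl fun (r : ℕ) _ => show (2 * r - c) * (2 * (d * r % c) - c) =
      4 * (r * (d * r % c)) - 2 * c * r - 2 * c * (d * r % c) + (c : ℤ) ^ 2 by ring]
    simp only [sumMulResidue, sum_add_distrib, sum_sub_distrib, ← mul_sum, sum_const, card_range,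
      nsmul_eq_mul]
    linear_combination (-(c : ℤ)) * hres - (c : ℤ) * hid
  calc 4 * c ^ 2 * dedekindSum d c
      = ∑ r ∈ range c, (((2 * r - c) * (2 * (d * r % c) - c) : ℤ) : ℝ) - c ^ 2 := by
        rw [dedekindSum, Int.toNat_natCast, Int.cast_natCast, mul_sum, sum_congr rfl hterm,
          sum_sub_distrib, sum_ite_eq' (range c) 0, if_pos (mem_range.2 hc.pos)]
    _ = ((4 * sumMulResidue d c - c ^ 2 * (c - 1) : ℤ) : ℝ) := by
        rw [← Int.cast_sum, hint]
        push_cast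
        ring

theorem six_mul_sum_range_sq (n : ℕ) :
    6 * ∑ r ∈ range n, (r : ℤ) ^ 2 = n * (n - 1) * (2 * n - 1) := by
  induction n with
  | zero => simp
  | succ n ih =>
    rw [sum_range_succ, mul_add, ih]
    push_cast
    ring

theorem dvd_twelve_mul_sumMulResidue_sub (d : ℤ) (c : ℕ) :
    (c : ℤ) ∣ 12 * sumMulResidue d c - 3 * c ^ 2 * (c - 1) := by
  have hS : sumMulResidue d c =
      d * ∑ r ∈ range c, (r : ℤ) ^ 2 - c * ∑ r ∈ range c, r * (d * r / c) := by
    rw [sumMulResidue, mul_sum, mul_sum, ← sum_sub_distrib]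
    refine sum_congr rfl fun r _ => ?_
    rw [Int.emod_def]
    ring
  exact ⟨2 * d * (c - 1) * (2 * c - 1) - 12 * ∑ r ∈ range c, r * (d * r / c) - 3 * c * (c - 1),
    by linear_combination 12 * hS + 2 * d * six_mul_sum_range_sq c⟩

theorem Nat.sum_Icc_mul_div_add_sum_Icc_mul_div {p q : ℕ} (hpq : p.Coprime q) :
    ∑ a ∈ Icc 1 (p / 2), a * q / p + ∑ b ∈ Icc 1 (q / 2), b * p / q = p / 2 * (q / 2) := by
  -- Both sums count lattice points of `[1, p/2] × [1, q/2]`, on either side of the line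
  -- `b p = a q`, which by coprimality passes through none of them.
  have count : ∀ {p q : ℕ}, 0 < p → ∀ a ≤ p / 2,
      a * q / p = ∑ b ∈ Icc 1 (q / 2), if b * p ≤ a * q then 1 else 0 := by
    intro p q hp a ha
    rw [← card_filter, ← Ico_add_one_right_eq_Icc]
    exact ZMod.div_eq_filter_card hp <|
      (Nat.div_le_div_right (Nat.mul_le_mul_right q ha)).trans (Nat.div_mul_div_le_div p q 2)
  rcases Nat.eq_zero_or_pos p with rfl | hp
  · simp
  rcases Nat.eq_zero_or_pos q with rfl | hq
  · simp
  rw [sum_congr rfl fun a ha => count hp a (mem_Icc.1 ha).2,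
    sum_congr rfl fun b hb => count hq b (mem_Icc.1 hb).2, sum_comm (s := Icc 1 (q / 2)),
    ← sum_add_distrib]
  have hne : ∀ a ∈ Icc 1 (p / 2), ∀ b, a * q ≠ b * p := by
    intro a ha b hab
    have : p ∣ a := hpq.dvd_of_dvd_mul_right ⟨b, by rw [hab, mul_comm]⟩
    have := Nat.le_of_dvd (mem_Icc.1 ha).1 this
    have := (mem_Icc.1 ha).2
    omega
  calc _ = ∑ a ∈ Icc 1 (p / 2), ∑ b ∈ Icc 1 (q / 2), 1 := by
        refine sum_congr rfl fun a ha => ?_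
        rw [← sum_add_distrib]
        refine sum_congr rfl fun b _ => ?_
        have := hne a ha b
        split_ifs <;> omega
    _ = p / 2 * (q / 2) := by simp

def eisensteinSum (m : ℤ) (c : ℕ) : ℤ := ∑ a ∈ Icc 1 (c / 2), a * m / c

theorem eisensteinSum_natCast (n c : ℕ) :
    eisensteinSum n c = ((∑ a ∈ Icc 1 (c / 2), a * n / c : ℕ) : ℤ) := by
  simp [eisensteinSum]

theorem eisensteinSum_add_eisensteinSum {p q : ℕ} (hpq : p.Coprime q) :
    eisensteinSum q p + eisensteinSum p q = (p / 2 * (q / 2) : ℕ) := by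
  rw [eisensteinSum_natCast, eisensteinSum_natCast, ← Nat.cast_add,
    Nat.sum_Icc_mul_div_add_sum_Icc_mul_div hpq]

theorem negOnePow_eisensteinSum_congr {m m' : ℤ} {c : ℕ} (h : m ≡ m' [ZMOD 2 * c]) :
    (eisensteinSum m c).negOnePow = (eisensteinSum m' c).negOnePow := by
  obtain ⟨t, ht⟩ := h.dvd
  rcases eq_or_ne c 0 with rfl | hc
  · simp [eisensteinSum]
  have : eisensteinSum m' c = eisensteinSum m c + 2 * ∑ a ∈ Icc 1 (c / 2), a * t := by
    rw [eisensteinSum, eisensteinSum, mul_sum, ← sum_add_distrib]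
    refine sum_congr rfl fun a _ => ?_
    rw [show (a : ℤ) * m' = a * m + c * (2 * a * t) by linear_combination (a : ℤ) * ht,
      Int.add_mul_ediv_left _ _ (by exact_mod_cast hc)]
    ring
  rw [this, Int.negOnePow_add, Int.negOnePow_two_mul, mul_one]

theorem eisensteinSum_neg {m : ℤ} {c : ℕ} (hmc : m.gcd c = 1) :
    eisensteinSum (-m) c = -eisensteinSum m c - (c / 2 : ℕ) := by
  have hcop : IsCoprime (c : ℤ) m := Int.isCoprime_iff_gcd_eq_one.2 (by rwa [Int.gcd_comm])
  have hterm : ∀ a ∈ Icc 1 (c / 2), (a : ℤ) * -m / c = -(a * m / c) - 1 := by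
    intro a ha
    have ha := mem_Icc.1 ha
    have hndvd : ¬ (c : ℤ) ∣ a * m := fun h => by
      have := Int.le_of_dvd (by exact_mod_cast ha.1) (hcop.dvd_of_dvd_mul_right h)
      omega
    rw [mul_neg, Int.neg_ediv, if_neg hndvd, Int.sign_natCast_of_ne_zero (by omega)]
  rw [eisensteinSum, sum_congr rfl hterm, sum_sub_distrib, sum_neg_distrib, eisensteinSum]
  simp

theorem jacobiSym_eq_negOnePow_eisensteinSum {c : ℕ} (hc : Odd c) {m : ℤ} (hm : Odd m)
    (hmc : m.gcd c = 1) : jacobiSym m c = (eisensteinSum m c).negOnePow := by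
  induction c using Nat.strong_induction_on generalizing m with
  | _ c ih =>
  obtain rfl | hc1 : c = 1 ∨ 1 < c := by have := hc.pos; omega
  · simp [eisensteinSum]
  have of_pos : ∀ n : ℕ, 0 < n → n < c → Odd n → n.Coprime c →
      jacobiSym n c = (eisensteinSum n c).negOnePow := by
    intro n hn0 hnc hn hcop
    have hsum := eisensteinSum_add_eisensteinSum hcop.symm
    rw [← eq_sub_iff_add_eq] at hsum
    rw [jacobiSym.quadratic_reciprocity hn hc,
      ih n hnc hn (by exact_mod_cast hc) (by simpa using hcop.symm), hsum, Int.negOnePow_sub,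
      ← Int.coe_negOnePow_natCast, mul_comm (n / 2)]
    simp
  have of_abs_lt : ∀ m : ℤ, -c ≤ m → m < c → Odd m → m.gcd c = 1 →
      jacobiSym m c = (eisensteinSum m c).negOnePow := by
    intro m hlo hhi hm hmc
    obtain ⟨n, rfl | rfl⟩ := Int.eq_nat_or_neg m
    · have hn : Odd n := by exact_mod_cast hm
      exact of_pos n hn.pos (by omega) hn (by simpa using hmc)
    · have hn : Odd n := by simpa using hm
      have hnc : n ≠ c := by rintro rfl; simp at hmc; omega
      rw [jacobiSym.neg _ hc, of_pos n hn.pos (by omega) hn (by simpa using hmc),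
        eisensteinSum_neg (by simpa using hmc), Int.negOnePow_sub, Int.negOnePow_neg,
        ZMod.χ₄_eq_neg_one_pow (Nat.odd_iff.mp hc), ← Int.coe_negOnePow_natCast]
      simp [mul_comm]
  set m' := (m + c) % (2 * c) - c with hm'
  have hmm' : m ≡ m' [ZMOD 2 * c] := by
    simpa using ((Int.mod_modEq (m + c) (2 * c)).sub_right (c : ℤ)).symm
  have hbounds := Int.emod_nonneg (m + c) (b := 2 * c) (by omega)
  have hbounds' := Int.emod_lt_of_pos (m + c) (b := 2 * c) (by omega)
  obtain ⟨t, ht⟩ := hmm'.dvd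
  have hm'_eq : m' = m + c * (2 * t) := by linear_combination ht
  rw [negOnePow_eisensteinSum_congr hmm', jacobiSym.mod_left' (a₂ := m') (by simp [hm'_eq])]
  refine of_abs_lt m' (by omega) (by omega) ?_ ?_
  · rw [hm'_eq]
    exact hm.add_even ((even_two_mul t).mul_left _)
  · rw [hm'_eq]
    simpa using hmc

theorem even_sumMulResidue_sub_eisensteinSum {m : ℤ} {c : ℕ} (hc : Odd c) (hm : Odd m)
    (hmc : m.gcd c = 1) : Even (sumMulResidue m c - (c / 2 : ℕ) - eisensteinSum m c) := by
  obtain ⟨u, rfl⟩ := hc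
  obtain ⟨t, rfl⟩ := hm
  have hpair : ∀ r ∈ Icc 1 u, Even (r * ((2 * t + 1) * r % (2 * u + 1 : ℕ)) +
      (2 * u + 1 - r : ℕ) * ((2 * t + 1) * (2 * u + 1 - r : ℕ) % (2 * u + 1 : ℕ)) - 1 -
        r * (2 * t + 1) / (2 * u + 1 : ℕ)) := by
    intro r hr
    have hr := mem_Icc.1 hr
    rw [mul_sub_emod_eq_sub_emod hmc (by omega) (by omega), Nat.cast_sub (by omega)]
    have hdiv := Int.emod_add_mul_ediv ((2 * t + 1) * r) (2 * u + 1 : ℕ)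
    rw [mul_comm (r : ℤ) (2 * t + 1)]
    push_cast at hdiv ⊢
    set ρ := (2 * t + 1) * r % (2 * u + 1)
    set q := (2 * t + 1) * r / (2 * u + 1)
    exact ⟨r * ρ - (2 * u + 1) * (t + 1) * r + 2 * u * (u + 1) * (q + 1),
      by linear_combination (-(2 * u + 1 : ℤ)) * hdiv⟩
  have hu : (2 * u + 1) / 2 = u := by omega
  rw [hu, sumMulResidue, sum_range_two_mul_add_one_eq_sum_Icc _ (by simp), eisensteinSum, hu,
    show (u : ℤ) = ∑ r ∈ Icc 1 u, 1 by simp, ← sum_sub_distrib, ← sum_sub_distrib]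
  exact even_sum _ hpair

theorem sumMulResidue_congr {d d' : ℤ} {c : ℕ} (h : d ≡ d' [ZMOD c]) :
    sumMulResidue d c = sumMulResidue d' c :=
  sum_congr rfl fun r _ => by rw [(h.mul_right r).eq]

theorem jacobiSym_eq_negOnePow_sumMulResidue {d : ℤ} {c : ℕ} (hc : Odd c) (hdc : d.gcd c = 1) :
    jacobiSym d c = (sumMulResidue d c - (c / 2 : ℕ)).negOnePow := by
  obtain ⟨u, hu⟩ := hc
  set m := d + c * (d + 1)
  have hm : Odd m := ⟨(u + 1) * d + u, by simp only [m, hu]; push_cast; ring⟩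
  have hmd : m ≡ d [ZMOD c] := by simp [m, Int.ModEq]
  have hmc : m.gcd c = 1 := by simpa [m] using hdc
  rw [jacobiSym.mod_left' hmd.symm, jacobiSym_eq_negOnePow_eisensteinSum ⟨u, hu⟩ hm hmc,
    ← sumMulResidue_congr hmd]
  congr 1
  rw [Int.negOnePow_eq_iff, ← even_neg, neg_sub]
  exact even_sumMulResidue_sub_eisensteinSum ⟨u, hu⟩ hm hmc

theorem modEq_eight_of_mul_eq {c : ℕ} (hc : Odd c) {S k : ℤ}
    (h : c * k = 12 * S - 3 * c ^ 2 * (c - 1)) :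
    k ≡ c + 1 - 2 * (S - (c / 2 : ℕ)).negOnePow [ZMOD 8] := by
  obtain ⟨u, rfl⟩ := hc
  obtain ⟨e, x, hx, rfl⟩ :
      ∃ e x : ℤ, (2 * e + x).negOnePow = (1 - 2 * x : ℤ) ∧ S = u + (2 * e + x) := by
    obtain ⟨e, he | he⟩ := Int.even_or_odd' (S - u)
    · exact ⟨e, 0, by simp [Int.negOnePow_two_mul], by omega⟩
    · exact ⟨e, 1, by simp [Int.negOnePow_two_mul_add_one], by omega⟩
  rw [show (2 * u + 1) / 2 = u by omega, add_sub_cancel_left, hx]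
  apply (ZMod.intCast_eq_intCast_iff _ _ 8).1
  have key : ∀ u e x k : ZMod 8, (2 * u + 1) * k = 12 * (u + (2 * e + x)) -
      3 * (2 * u + 1) ^ 2 * (2 * u + 1 - 1) → k = 2 * u + 1 + 1 - 2 * (1 - 2 * x) := by
    decide
  have := congrArg (Int.cast : ℤ → ZMod 8) h
  push_cast at this ⊢
  exact key _ _ _ _ this

theorem twelve_c_dedekindSum_mod_eight_general (d : ℤ) (c : ℕ) (hodd : Odd c)
    (hdc : Int.gcd d c = 1) :
    ∃ k : ℤ, ((12 * c : ℤ) : ℝ) * dedekindSum d c = (k : ℝ) ∧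
      k ≡ c + 1 - 2 * jacobiSym d c [ZMOD 8] := by
  obtain ⟨k, hk⟩ := dvd_twelve_mul_sumMulResidue_sub d c
  refine ⟨k, ?_, ?_⟩
  · have hc : (c : ℝ) ≠ 0 := by exact_mod_cast hodd.pos.ne'
    apply mul_left_cancel₀ hc
    calc (c : ℝ) * (((12 * c : ℤ) : ℝ) * dedekindSum d c)
        = 3 * (4 * c ^ 2 * dedekindSum d c) := by push_cast; ring
      _ = c * k := by
        have hk' : ((12 * sumMulResidue d c - 3 * c ^ 2 * (c - 1) : ℤ) : ℝ) = c * k := by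
          exact_mod_cast hk
        rw [four_mul_sq_mul_dedekindSum hodd hdc, ← hk']
        push_cast
        ring
  · rw [jacobiSym_eq_negOnePow_sumMulResidue hodd hdc]
    exact modEq_eight_of_mul_eq hodd (by linear_combination -hk)

theorem twelve_c_dedekindSum_mod_eight (d : ℤ) (c : ℕ) (hc : 0 < c) (hodd : Odd c)
    (hdc : Int.gcd d c = 1) :
    ∃ k : ℤ, ((12 * c : ℤ) : ℝ) * dedekindSum d c = (k : ℝ) ∧
      k ≡ c + 1 - 2 * jacobiSym d c [ZMOD 8] :=
  twelve_c_dedekindSum_mod_eight_general d c hodd hdc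
end
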